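/- Let m, g be positive integers, μ a partition with at most m parts, each part at most g, T ∈ K(μ,m), and S = Ψ_{m,g}(T). Then for every 1 ≤ i ≤ m the partition outside(S^{(i)}) is the rectangular complement of the shape of T^{(i)} inside the rectangle with i rows and g columns (rotated by 180°): the length of its j-th column equals i minus the length of the (g−j)-th column of T^{(i)}. In particular outside(S) = μ̂, so Ψ_{m,g}(T) ∈ SSOT_g(μ̂,m). -/

import Mathlib

open scoped Classical

namespace KingSSOT

/-! ### Partitions -/

def zeroP : ℕ → ℕ := fun _ => 0

/-- `p` is a partition: weakly decreasing row lengths, eventually zero. -/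
def IsPartition (p : ℕ → ℕ) : Prop :=
  (∀ i, p (i + 1) ≤ p i) ∧ ∃ N, p N = 0

/-- number of boxes of a partition -/
noncomputable def psize (p : ℕ → ℕ) : ℕ :=
  sSup (Set.range fun N => ∑ i ∈ Finset.range N, p i)

/-- length of the `j`-th column (columns indexed starting at 1) -/
noncomputable def colLen (p : ℕ → ℕ) (j : ℕ) : ℕ := sInf {r | p r < j}

/-! ### Oscillating horizontal strips -/

/-- apply one step of a row sequence: a positive entry `r` adds a box in (1-indexed) row `r`,
a negative entry `-r` removes a box from row `r`. -/
def applyStep (p : ℕ → ℕ) (r : ℤ) : ℕ → ℕ := fun k =>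
  if (k : ℤ) + 1 = r then p k + 1 else if (k : ℤ) + 1 = -r then p k - 1 else p k

/-- the sequence of partitions of an oscillating horizontal strip with given inside
and row sequence -/
def partsOf (p0 : ℕ → ℕ) (rows : List ℤ) : List (ℕ → ℕ) := rows.scanl applyStep p0

def outsideOf (p0 : ℕ → ℕ) (rows : List ℤ) : ℕ → ℕ := rows.foldl applyStep p0

/-- the maximal partition `S_*` of an oscillating horizontal strip -/
def starOf (p0 : ℕ → ℕ) (rows : List ℤ) : ℕ → ℕ :=
  (rows.filter fun z => decide (0 < z)).foldl applyStep p0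

/-- `q` is obtained from `p` by adding one box in (0-indexed) row `i` -/
def AddBox (p q : ℕ → ℕ) (i : ℕ) : Prop := q i = p i + 1 ∧ ∀ k, k ≠ i → q k = p k

def StepOK (p : ℕ → ℕ) (r : ℤ) : Prop :=
  (∃ i : ℕ, r = (i : ℤ) + 1 ∧ AddBox p (applyStep p r) i) ∨
  (∃ i : ℕ, r = -((i : ℤ) + 1) ∧ AddBox (applyStep p r) p i)

/-- `(p0, rows)` encodes an oscillating horizontal strip: all intermediate shapes are
partitions, all steps genuinely add/remove one box, and the row numbers are weakly
decreasing. -/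
def IsOHS (p0 : ℕ → ℕ) (rows : List ℤ) : Prop :=
  IsPartition p0 ∧ List.Chain' (· ≥ ·) rows ∧
  (∀ q ∈ partsOf p0 rows, IsPartition q) ∧
  ∀ k, k < rows.length → StepOK ((partsOf p0 rows).getD k zeroP) (rows.getD k 0)

/-- a list of partitions forms an oscillating horizontal strip -/
def IsOHSspan (l : List (ℕ → ℕ)) : Prop :=
  ∃ rows : List ℤ, IsOHS (l.headD zeroP) rows ∧ partsOf (l.headD zeroP) rows = l

/-! ### (Skew) semistandard oscillating tableaux -/

/-- data of a (skew) semistandard oscillating tableau: for each `i`, the inside partition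
and the row sequence of the `(i+1)`-st oscillating horizontal strip `T^{(i+1)}`. -/
structure SSOT where
  ins : ℕ → ℕ → ℕ
  rows : ℕ → List ℤ

def IsSSOT (T : SSOT) : Prop :=
  (∀ i, IsOHS (T.ins i) (T.rows i)) ∧
  (∀ i, T.ins (i + 1) = outsideOf (T.ins i) (T.rows i)) ∧
  ∃ N, ∀ i, N ≤ i → T.rows i = []

def OutsideIs (T : SSOT) (ν : ℕ → ℕ) : Prop := ∃ N, ∀ i, N ≤ i → T.ins i = ν

/-- every partition occurring in `T` has at most `g` columns, i.e. `c(T) ≤ g` -/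
def cBound (g : ℕ) (T : SSOT) : Prop :=
  ∀ i, ∀ q ∈ partsOf (T.ins i) (T.rows i), q 0 ≤ g

def wtOf (T : SSOT) : ℕ → ℕ := fun i => (T.rows i).length

/-- membership in `SSOT_g(ν, m)` with inside `lam` (`lam = zeroP` for honest SSOT) -/
def SSOTmem (g m : ℕ) (lam ν : ℕ → ℕ) (T : SSOT) : Prop :=
  IsSSOT T ∧ T.ins 0 = lam ∧ OutsideIs T ν ∧ (∀ i, m ≤ i → T.rows i = []) ∧ cBound g T

/-- the crystal weight `(g - α_1, …, g - α_m)` of an element of `SSOT_g(ν,m)` -/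
def cwt (g : ℕ) (T : SSOT) : ℕ → ℤ := fun i => (g : ℤ) - (T.rows i).length

/-- complement `μ̂` of `μ` in the `m × g` rectangle: `μ̂_i = g - μ_{m+1-i}` -/
def hatP (m g : ℕ) (μ : ℕ → ℕ) : ℕ → ℕ := fun i => if i < m then g - μ (m - 1 - i) else 0

/-! ### King tableaux -/

/-- A King tableau of shape `μ` for `Sp(2m)`.  The alphabet `1 < 1̄ < 2 < 2̄ < ⋯ < m < m̄`
is encoded by `i ↦ 2i-1`, `ī ↦ 2i`.  Rows and columns are 0-indexed. -/
structure King (m : ℕ) (μ : ℕ → ℕ) where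
  entry : ℕ → ℕ → ℕ
  rowsWeak : ∀ r c, c + 1 < μ r → entry r c ≤ entry r (c + 1)
  colsStrict : ∀ r c, c < μ (r + 1) → entry r c < entry (r + 1) c
  symplectic : ∀ r c, c < μ r → 2 * r + 1 ≤ entry r c
  upperBound : ∀ r c, c < μ r → entry r c ≤ 2 * m
  zeroOutside : ∀ r c, ¬ c < μ r → entry r c = 0

/-- `T` has an entry with value `v` somewhere in (0-indexed) column `c` -/
def hasEntry {m : ℕ} {μ : ℕ → ℕ} (T : King m μ) (c v : ℕ) : Prop :=
  ∃ r, c < μ r ∧ T.entry r c = v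

def countEntry (m g : ℕ) {μ : ℕ → ℕ} (T : King m μ) (v : ℕ) : ℕ :=
  ((Finset.range m ×ˢ Finset.range g).filter
    (fun rc => rc.2 < μ rc.1 ∧ T.entry rc.1 rc.2 = v)).card

/-- the crystal weight of a King tableau: `α_i = #(i) - #(ī)` (here `i` is 0-indexed). -/
def kingWt (m g : ℕ) {μ : ℕ → ℕ} (T : King m μ) : ℕ → ℤ :=
  fun i => (countEntry m g T (2 * i + 1) : ℤ) - countEntry m g T (2 * i + 2)

/-- The defining property of King's bijection `Ψ_{m,g}`: for each `i < m` (the strip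
`T^{(i+1)}` of `S`), the horizontal strip `S_*/inside` has no box in (1-indexed) column `j`
iff the letter `i+1` occurs in (0-indexed) column `g-j` of the King tableau, and
`S_*/outside` has a box in column `j` iff the letter `\overline{i+1}` occurs in column
`g-j`; moreover all partitions of the strips fit in `g` columns. -/
def PsiRel (m g : ℕ) {μ : ℕ → ℕ} (T : King m μ) (S : SSOT) : Prop :=
  ∀ i, i < m →
    (starOf (S.ins i) (S.rows i)) 0 ≤ g ∧
    ∀ j, 1 ≤ j → j ≤ g →
      ((colLen (starOf (S.ins i) (S.rows i)) j = colLen (S.ins i) j) ↔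
        hasEntry T (g - j) (2 * i + 1)) ∧
      ((colLen (starOf (S.ins i) (S.rows i)) j
          = colLen (outsideOf (S.ins i) (S.rows i)) j + 1) ↔
        hasEntry T (g - j) (2 * i + 2))



/-! ### Semistandard Young tableaux as lists of rows, Schensted insertion -/

/-- Schensted row insertion (row bumping) of a letter into a tableau:
bump the first entry strictly larger than the inserted letter. -/
def rowInsert : List (List ℕ) → ℕ → List (List ℕ)
  | [], a => [[a]]
  | r :: rest, a =>
    match r.findIdx? (fun x => decide (a < x)) with
    | none => (r ++ [a]) :: rest
    | some k => r.set k a :: rowInsert rest (r.getD k 0)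

def shapeOf (Q : List (List ℕ)) : ℕ → ℕ := fun r => (Q.getD r []).length

def sizeT (Q : List (List ℕ)) : ℕ := Q.flatten.length

/-- add the entry `x` at the end of (0-indexed) row `r` -/
def placeAt (Q : List (List ℕ)) (r x : ℕ) : List (List ℕ) :=
  if r < Q.length then Q.set r ((Q.getD r []) ++ [x]) else Q ++ [[x]]

def maxEntry (Q : List (List ℕ)) : ℕ := Q.flatten.foldr max 0

/-- remove the rightmost cell containing `x` (for `x` the largest entry of `Q`,
this is the last cell of the topmost row containing `x`). -/
def removeRM (x : ℕ) (Q : List (List ℕ)) : List (List ℕ) :=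
  let r := Q.findIdx (fun row => row.contains x)
  (Q.set r ((Q.getD r []).dropLast)).filter (fun row => !row.isEmpty)

/-- repeatedly (k times) remove the rightmost cell containing the current largest entry -/
def stripK : ℕ → List (List ℕ) → List (List ℕ)
  | 0, Q => Q
  | k + 1, Q => stripK k (removeRM (maxEntry Q) Q)

def getCol (Q : List (List ℕ)) (j : ℕ) : List ℕ := Q.filterMap (fun r => r[j]?)

def transposeT (Q : List (List ℕ)) : List (List ℕ) :=
  (List.range (Q.headD []).length).map (getCol Q)

/-- auxiliary "weak" row bumping (bump the first entry `≥ a`), used to define column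
insertion via transposition. -/
def rowInsertW : List (List ℕ) → ℕ → List (List ℕ)
  | [], a => [[a]]
  | r :: rest, a =>
    match r.findIdx? (fun x => decide (a ≤ x)) with
    | none => (r ++ [a]) :: rest
    | some k => r.set k a :: rowInsertW rest (r.getD k 0)

/-- Schensted column insertion of a letter into a semistandard tableau -/
def colInsert (Q : List (List ℕ)) (a : ℕ) : List (List ℕ) :=
  transposeT (rowInsertW (transposeT Q) a)

def IsSSYT (Q : List (List ℕ)) : Prop :=
  (∀ row ∈ Q, row ≠ [] ∧ List.Chain' (· ≤ ·) row) ∧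
  List.Chain' (· ≥ ·) (Q.map List.length) ∧
  (∀ r c, c < (Q.getD (r + 1) []).length →
    (Q.getD r []).getD c 0 < (Q.getD (r + 1) []).getD c 0)

/-! ### Matrices, two-line arrays, and column RSK -/

/-- the two-line array `w_M` of a matrix (`1`-indexed entries, support in `[1,n]²`):
top entries weakly increasing, bottom entries weakly decreasing within a fixed top entry. -/
def twoLine (M : ℕ → ℕ → ℕ) (n : ℕ) : List (ℕ × ℕ) :=
  (List.range n).flatMap fun i =>
    ((List.range n).reverse).flatMap fun j =>
      List.replicate (M (i + 1) (j + 1)) (i + 1, j + 1)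

/-- the `P`-tableau of column RSK: column-insert the bottom row of `w_M` -/
def PM (M : ℕ → ℕ → ℕ) (n : ℕ) : List (List ℕ) :=
  (twoLine M n).foldl (fun Q c => colInsert Q c.2) []

def trM (M : ℕ → ℕ → ℕ) : ℕ → ℕ → ℕ := fun p q => M q p

/-- the `Q`-tableau of column RSK: `Q(M) = P(Mᵀ)` -/
def Qm (M : ℕ → ℕ → ℕ) (n : ℕ) : List (List ℕ) := PM (trM M) n

def rowSumM (M : ℕ → ℕ → ℕ) (n i : ℕ) : ℕ := ∑ j ∈ Finset.range n, M i (j + 1)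

def suppIn (M : ℕ → ℕ → ℕ) (n : ℕ) : Prop :=
  ∀ p q, M p q ≠ 0 → 1 ≤ p ∧ p ≤ n ∧ 1 ≤ q ∧ q ≤ n

/-- membership in `M̂_m^g`: symmetric, even diagonal, `c(M) ≤ 2g` -/
def MhatMem (m g : ℕ) (M : ℕ → ℕ → ℕ) : Prop :=
  suppIn M m ∧ (∀ p q, M p q = M q p) ∧ (∀ p, 2 ∣ M p p) ∧
  ((PM M m).headD []).length ≤ 2 * g

/-! ### type-A crystal operators on tableaux -/

/-- row reading word with cell positions: rows top to bottom, right to left in each row -/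
def cellsOf (Q : List (List ℕ)) : List (ℕ × ℕ × ℕ) :=
  ((List.range Q.length).zip Q).flatMap fun p =>
    (((List.range p.2.length).zip p.2).reverse).map fun q => (p.1, q.1, q.2)

/-- bracketing for letters `i, i+1` along the reading word.  Returns the positions of
unpaired letters `i+1` (chronological order) and the stack of unpaired `i`'s
(most recent first). -/
def pairState (i : ℕ) (cs : List (ℕ × ℕ × ℕ)) : List (ℕ × ℕ) × List (ℕ × ℕ) :=
  cs.foldl
    (fun st c =>
      if c.2.2 = i then (st.1, (c.1, c.2.1) :: st.2)
      else if c.2.2 = i + 1 then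
        match st.2 with
        | [] => (st.1 ++ [(c.1, c.2.1)], st.2)
        | _ :: t => (st.1, t)
      else st)
    ([], [])

def setCell (Q : List (List ℕ)) (r c v : ℕ) : List (List ℕ) :=
  Q.set r ((Q.getD r []).set c v)

/-- crystal operator `e_i` on semistandard tableaux: change the last unpaired `i+1` to `i` -/
def eT (i : ℕ) (Q : List (List ℕ)) : Option (List (List ℕ)) :=
  match (pairState i (cellsOf Q)).1.getLast? with
  | none => none
  | some rc => some (setCell Q rc.1 rc.2 i)

/-- crystal operator `f_i` on semistandard tableaux: change the first unpaired `i` to `i+1` -/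
def fT (i : ℕ) (Q : List (List ℕ)) : Option (List (List ℕ)) :=
  match (pairState i (cellsOf Q)).2.getLast? with
  | none => none
  | some rc => some (setCell Q rc.1 rc.2 (i + 1))

/-! ### operators `e_i^Q`, `e_i^P` on matrices -/

/-- bottom entries of the columns of `w_M` with top entry `i`, in weakly decreasing order -/
def rowListM (M : ℕ → ℕ → ℕ) (n i : ℕ) : List ℕ :=
  ((List.range n).reverse).flatMap fun j => List.replicate (M i (j + 1)) (j + 1)

/-- remove the first element `< q` from a weakly decreasing list (i.e. the largest one) -/
def removeLtNat (q : ℕ) : List ℕ → Option (List ℕ)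
  | [] => none
  | p :: t => if p < q then some t else (removeLtNat q t).map (p :: ·)

/-- pairing `(p, q)`, `p < q`, between the (decreasingly sorted) bottom entries of rows
`i` and `i+1`; returns (unpaired elements of `A`, unpaired elements of `B`),
both in decreasing order. -/
def pairRows (A B : List ℕ) : List ℕ × List ℕ :=
  B.foldl
    (fun st q =>
      match removeLtNat q st.1 with
      | some A' => (A', st.2)
      | none => (st.1, st.2 ++ [q]))
    (A, [])

def updM (M : ℕ → ℕ → ℕ) (a b v : ℕ) : ℕ → ℕ → ℕ :=
  fun p q => if p = a ∧ q = b then v else M p q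

/-- `e_i^Q`: replace the unpaired column `(i+1; b)` of `w_M` with largest `b` by `(i; b)` -/
def eQmat (M : ℕ → ℕ → ℕ) (n i : ℕ) : Option (ℕ → ℕ → ℕ) :=
  match (pairRows (rowListM M n i) (rowListM M n (i + 1))).2.head? with
  | none => none
  | some b => some (updM (updM M (i + 1) b (M (i + 1) b - 1)) i b (M i b + 1))

/-- `f_i^Q`: replace the unpaired column `(i; a)` of `w_M` with smallest `a` by `(i+1; a)` -/
def fQmat (M : ℕ → ℕ → ℕ) (n i : ℕ) : Option (ℕ → ℕ → ℕ) :=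
  match (pairRows (rowListM M n i) (rowListM M n (i + 1))).1.getLast? with
  | none => none
  | some a => some (updM (updM M i a (M i a - 1)) (i + 1) a (M (i + 1) a + 1))

def ePmat (M : ℕ → ℕ → ℕ) (n i : ℕ) : Option (ℕ → ℕ → ℕ) :=
  (eQmat (trM M) n i).map trM

def fPmat (M : ℕ → ℕ → ℕ) (n i : ℕ) : Option (ℕ → ℕ → ℕ) :=
  (fQmat (trM M) n i).map trM

/-- `ẽ_i = e_i^P ∘ e_i^Q` on matrices -/
def etM (M : ℕ → ℕ → ℕ) (n i : ℕ) : Option (ℕ → ℕ → ℕ) :=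
  (eQmat M n i).bind fun M' => ePmat M' n i

/-- `f̃_i = f_i^P ∘ f_i^Q` on matrices -/
def ftM (M : ℕ → ℕ → ℕ) (n i : ℕ) : Option (ℕ → ℕ → ℕ) :=
  (fQmat M n i).bind fun M' => fPmat M' n i


/-! ### Φ and local operators -/


/-- standardization: concatenate the partition sequences of the strips of `T`
(up to strip `N`), dropping repeated endpoints -/
def stdConcat (T : SSOT) (N : ℕ) : List (ℕ → ℕ) :=
  partsOf (T.ins 0) (T.rows 0) ++
    (List.range N).flatMap fun k => (partsOf (T.ins (k + 1)) (T.rows (k + 1))).tail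

/-- `β_i = α_1 + ⋯ + α_i` for `α = wt(T)` -/
def betaT (T : SSOT) (i : ℕ) : ℕ := ∑ k ∈ Finset.range i, (T.rows k).length

/-- the semistandardization value of the index `p ∈ [1, m']`:
the `i` with `β_{i-1} < p ≤ β_i` -/
noncomputable def vOf (T : SSOT) (p : ℕ) : ℕ := sInf {i | p ≤ betaT T i}

/-- the recording data of the reverse row-insertion procedure along the standardization
`lams`: `V p` are the recording tableaux, and `inv` records the involution pairs. -/
def PhiRec (lams : List (ℕ → ℕ)) (V : ℕ → List (List ℕ)) (inv : ℕ → ℕ) : Prop :=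
  V 0 = [] ∧
  ∀ p, p < lams.length - 1 →
    (∃ r, AddBox (lams.getD p zeroP) (lams.getD (p + 1) zeroP) r ∧
      V (p + 1) = placeAt (V p) r (p + 1)) ∨
    (∃ r j, AddBox (lams.getD (p + 1) zeroP) (lams.getD p zeroP) r ∧
      shapeOf (V (p + 1)) = lams.getD (p + 1) zeroP ∧
      rowInsert (V (p + 1)) j = V p ∧ inv (p + 1) = j ∧ inv j = p + 1)

/-- the graph of the map `Φ`: `M` is the semistandardization (with respect to `wt T`) of
the fixed-point-free involution `inv` produced by the reverse row-insertion recording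
procedure on the standardization of `T`. -/
def PhiRel (T : SSOT) (M : ℕ → ℕ → ℕ) : Prop :=
  ∃ (N : ℕ) (V : ℕ → List (List ℕ)) (inv : ℕ → ℕ),
    (∀ i, N ≤ i → T.rows i = []) ∧
    PhiRec (stdConcat T N) V inv ∧
    ∀ a b, M a b =
      ((Finset.Icc 1 ((stdConcat T N).length - 1)).filter
        (fun p => vOf T p = a ∧ vOf T (inv p) = b)).card

/-! ### the explicit local crystal operators on SSOT -/

def posM (l : List ℤ) : Multiset ℕ :=
  ↑(l.filterMap fun z => if 0 < z then some z.toNat else none)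

def negM (l : List ℤ) : Multiset ℕ :=
  ↑(l.filterMap fun z => if z < 0 then some (-z).toNat else none)

/-- `A ↑ B = (A \ B) ⊎ ((A ∩ B) + 1)` -/
def upM (A B : Multiset ℕ) : Multiset ℕ := (A - B) + (A ∩ B).map (· + 1)

/-- `A ↓ B = (A \ B) ⊎ ((A ∩ B) - 1)` -/
def downM (A B : Multiset ℕ) : Multiset ℕ := (A - B) + (A ∩ B).map (· - 1)

/-- the multiset `C_i(T) = r⁺(T^{(i)}) ⊎ (- r̄⁻(T^{(i)}))` (paper-indexed `i ≥ 1`) -/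
def Cmul (T : SSOT) (i : ℕ) : Multiset ℤ :=
  (posM (T.rows (i - 1))).map (fun n => (n : ℤ)) +
    (upM (negM (T.rows (i - 1))) (posM (T.rows i))).map (fun n => -(n : ℤ))

/-- the multiset `D_i(T) = r̄⁺(T^{(i+1)}) ⊎ (- r⁻(T^{(i+1)}))` (paper-indexed `i ≥ 1`) -/
def Dmul (T : SSOT) (i : ℕ) : Multiset ℤ :=
  (upM (posM (T.rows i)) (negM (T.rows (i - 1)))).map (fun n => (n : ℤ)) +
    (negM (T.rows i)).map (fun n => -(n : ℤ))

noncomputable def sortDesc (s : Multiset ℤ) : List ℤ := (s.sort (· ≤ ·)).reverse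

def removeLtInt (q : ℤ) : List ℤ → Option (List ℤ)
  | [] => none
  | p :: t => if p < q then some t else (removeLtInt q t).map (p :: ·)

/-- bracketing between `C` and `D` (both sorted decreasingly): pair `p ∈ C` with `q ∈ D`
whenever `p < q`; returns the unpaired elements of `C` and of `D`, decreasingly. -/
def pairZ (A B : List ℤ) : List ℤ × List ℤ :=
  B.foldl
    (fun st q =>
      match removeLtInt q st.1 with
      | some A' => (A', st.2)
      | none => (st.1, st.2 ++ [q]))
    (A, [])

def posZ (s : Multiset ℤ) : Multiset ℕ := (s.filter (fun z => 0 < z)).map Int.toNat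
def negZ (s : Multiset ℤ) : Multiset ℕ := (s.filter (fun z => z < 0)).map (fun z => (-z).toNat)

/-- row sequence of a strip with positive part `rp` and negative part `rm` -/
noncomputable def rowsFrom (rp rm : Multiset ℕ) : List ℤ :=
  ((rp.sort (· ≤ ·)).reverse).map (fun n => (n : ℤ)) ++
    (rm.sort (· ≤ ·)).map (fun n => -(n : ℤ))

/-- rebuild strips `i-1` and `i` (0-indexed) of `T` from new multisets `C`, `D` by
inverting the `↑`-operations -/
noncomputable def rebuild (T : SSOT) (i : ℕ) (C D : Multiset ℤ) : SSOT :=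
  let rows1 := rowsFrom (posZ C) (downM (negZ C) (posZ D))
  let rows2 := rowsFrom (downM (posZ D) (negZ C)) (negZ D)
  ⟨fun j => if j = i then outsideOf (T.ins (i - 1)) rows1 else T.ins j,
   fun j => if j = i - 1 then rows1 else if j = i then rows2 else T.rows j⟩

/-- raw local operator `ẽ_i` (paper-indexed `i ≥ 1`): after bracketing, move the largest
unpaired element of `D_i(T)` into `C_i(T)` -/
noncomputable def eLoc (i : ℕ) (T : SSOT) : Option SSOT :=
  match (pairZ (sortDesc (Cmul T i)) (sortDesc (Dmul T i))).2.head? with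
  | none => none
  | some b => some (rebuild T i (b ::ₘ Cmul T i) ((Dmul T i).erase b))

/-- raw local operator `f̃_i` (paper-indexed `i ≥ 1`): after bracketing, move the smallest
unpaired element of `C_i(T)` into `D_i(T)` -/
noncomputable def fLoc (i : ℕ) (T : SSOT) : Option SSOT :=
  match (pairZ (sortDesc (Cmul T i)) (sortDesc (Dmul T i))).1.getLast? with
  | none => none
  | some a => some (rebuild T i ((Cmul T i).erase a) (a ::ₘ Dmul T i))

/-- raw local operator `ẽ_0`: delete one addition and one removal of a box in row 1
from `T^{(1)}` -/
noncomputable def e0Loc (T : SSOT) : Option SSOT :=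
  if (1 : ℤ) ∈ T.rows 0 ∧ (-1 : ℤ) ∈ T.rows 0 then
    some ⟨T.ins, fun j => if j = 0 then ((T.rows 0).erase 1).erase (-1) else T.rows j⟩
  else none

/-- raw local operator `f̃_0`: append one addition and one removal of a box in row 1
to `T^{(1)}` -/
def f0Loc (T : SSOT) : Option SSOT :=
  some ⟨T.ins, fun j =>
    if j = 0 then
      ((T.rows 0).filter fun z => decide (0 < z)) ++
        (1 :: (-1) :: ((T.rows 0).filter fun z => decide (z < 0)))
    else T.rows j⟩

/-- the local operator `ẽ_i` relative to an ambient set: the result is `0` if it is not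
in the ambient set -/
noncomputable def eStepA (amb : SSOT → Prop) (i : ℕ) (T : SSOT) : Option SSOT :=
  match (if i = 0 then e0Loc T else eLoc i T) with
  | none => none
  | some T' => if amb T' then some T' else none

noncomputable def fStepA (amb : SSOT → Prop) (i : ℕ) (T : SSOT) : Option SSOT :=
  match (if i = 0 then f0Loc T else fLoc i T) with
  | none => none
  | some T' => if amb T' then some T' else none

noncomputable def ePowA (amb : SSOT → Prop) (i : ℕ) : ℕ → SSOT → Option SSOT
  | 0, T => some T
  | k + 1, T => (eStepA amb i T).bind (ePowA amb i k)

noncomputable def fPowA (amb : SSOT → Prop) (i : ℕ) : ℕ → SSOT → Option SSOT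
  | 0, T => some T
  | k + 1, T => (fStepA amb i T).bind (fPowA amb i k)

/-- `ε_i(T) = max {k : ẽ_i^k(T) ≠ 0}` -/
noncomputable def epsA (amb : SSOT → Prop) (i : ℕ) (T : SSOT) : ℕ :=
  sSup {k | (ePowA amb i k T).isSome}

/-- `φ_i(T) = max {k : f̃_i^k(T) ≠ 0}` -/
noncomputable def phiA (amb : SSOT → Prop) (i : ℕ) (T : SSOT) : ℕ :=
  sSup {k | (fPowA amb i k T).isSome}


/-!
An oscillating horizontal strip first adds boxes up to `S_*` and then removes boxes, in weakly
decreasing rows, so `S_* / inside` and `S_* / outside` are horizontal strips: each column of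
`S_*` is at most one box longer than the same column of the inside and of the outside. Hence
column `j` grows from inside to outside by one box, less one if `S_* / inside` misses column `j`
and less one if `S_* / outside` meets it; by the definition of `Ψ` these are the occurrences of
the letters `i` and `ī` in column `g - j` of `T`. Columns of `T` are strictly increasing, so each letter occurs there
at most once, and induction on `i` gives the complement formula. For `i = m` it says that the
outside and `μ̂` have the same column lengths, hence coincide; `c(S) ≤ g` holds because every
shape of a strip lies inside its `S_*`.
-/

open Finset

lemma IsPartition.antitone {p : ℕ → ℕ} (hp : IsPartition p) : Antitone p :=
  antitone_nat_of_succ_le hp.1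

lemma partsOf_cons (p : ℕ → ℕ) (r : ℤ) (rows : List ℤ) :
    partsOf p (r :: rows) = p :: partsOf (applyStep p r) rows := List.scanl_cons

lemma outsideOf_cons (p : ℕ → ℕ) (r : ℤ) (rows : List ℤ) :
    outsideOf p (r :: rows) = outsideOf (applyStep p r) rows := rfl

lemma outsideOf_mem_partsOf (p : ℕ → ℕ) (rows : List ℤ) : outsideOf p rows ∈ partsOf p rows := by
  have hne : partsOf p rows ≠ [] := by simp [partsOf]
  rw [outsideOf, ← List.getLast_scanl hne]
  exact List.getLast_mem hne

lemma partsOf_eq_cons (p : ℕ → ℕ) (rows : List ℤ) :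
    partsOf p rows = p :: (partsOf p rows).tail := by
  cases rows <;> simp [partsOf]

lemma self_mem_partsOf (p : ℕ → ℕ) (rows : List ℤ) : p ∈ partsOf p rows := by
  rw [partsOf_eq_cons]
  exact List.mem_cons_self

lemma mem_partsOf_append {p q : ℕ → ℕ} {rows rows' : List ℤ} :
    q ∈ partsOf p (rows ++ rows') ↔ q ∈ partsOf p rows ∨ q ∈ partsOf (outsideOf p rows) rows' := by
  rw [partsOf, List.scanl_append, List.mem_append, ← partsOf, ← outsideOf, ← partsOf]
  constructor
  · exact Or.imp_right List.mem_of_mem_tail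
  · rintro (hq | hq)
    · exact .inl hq
    · rw [partsOf_eq_cons, List.mem_cons] at hq
      rcases hq with rfl | hq
      · exact .inl (outsideOf_mem_partsOf p rows)
      · exact .inr hq

lemma applyStep_of_ne {p : ℕ → ℕ} {r : ℤ} {k : ℕ} (h₁ : (k : ℤ) + 1 ≠ r) (h₂ : (k : ℤ) + 1 ≠ -r) :
    applyStep p r k = p k := by
  simp [applyStep, h₁, h₂]

lemma le_applyStep (p : ℕ → ℕ) {r : ℤ} (hr : 0 ≤ r) : p ≤ applyStep p r := fun k => by
  simp only [applyStep]; split_ifs <;> omega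

lemma applyStep_le (p : ℕ → ℕ) {r : ℤ} (hr : r ≤ 0) : applyStep p r ≤ p := fun k => by
  simp only [applyStep]; split_ifs <;> omega

lemma outsideOf_of_forall_ne {p : ℕ → ℕ} {rows : List ℤ} {k : ℕ}
    (h : ∀ z ∈ rows, (k : ℤ) + 1 ≠ z ∧ (k : ℤ) + 1 ≠ -z) : outsideOf p rows k = p k := by
  induction rows generalizing p with
  | nil => rfl
  | cons r rows ih =>
    simp only [List.mem_cons, forall_eq_or_imp] at h
    rw [outsideOf_cons, ih h.2, applyStep_of_ne h.1.1 h.1.2]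

lemma le_of_mem_partsOf_of_nonneg {p q : ℕ → ℕ} {rows : List ℤ} (hrows : ∀ z ∈ rows, 0 ≤ z)
    (hq : q ∈ partsOf p rows) : q ≤ outsideOf p rows := by
  induction rows generalizing p q with
  | nil => simp_all [partsOf, outsideOf]
  | cons r rows ih =>
    simp only [List.mem_cons, forall_eq_or_imp] at hrows
    rw [partsOf_cons, List.mem_cons] at hq
    rcases hq with rfl | hq
    · rw [outsideOf_cons]
      exact (le_applyStep q hrows.1).trans (ih hrows.2 (self_mem_partsOf (applyStep q r) rows))
    · exact ih hrows.2 hq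

lemma le_of_mem_partsOf_of_nonpos {p q : ℕ → ℕ} {rows : List ℤ} (hrows : ∀ z ∈ rows, z ≤ 0)
    (hq : q ∈ partsOf p rows) : q ≤ p := by
  induction rows generalizing p with
  | nil => simp_all [partsOf]
  | cons r rows ih =>
    simp only [List.mem_cons, forall_eq_or_imp] at hrows
    rw [partsOf_cons, List.mem_cons] at hq
    rcases hq with rfl | hq
    · exact le_rfl
    · exact (ih hrows.2 hq).trans (applyStep_le p hrows.1)

lemma forall_mem_partsOf_cons {P : (ℕ → ℕ) → Prop} {p : ℕ → ℕ} {r : ℤ} {rows : List ℤ}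
    (h : ∀ q ∈ partsOf p (r :: rows), P q) : ∀ q ∈ partsOf (applyStep p r) rows, P q :=
  fun q hq => h q (by rw [partsOf_cons]; exact List.mem_cons_of_mem p hq)

/-- Rows grow from bottom to top, so row `s + 1` is final before row `s` starts to grow. -/
lemma outsideOf_succ_le_of_pos {p : ℕ → ℕ} {rows : List ℤ} (hsorted : rows.Pairwise (· ≥ ·))
    (hpos : ∀ z ∈ rows, 0 < z) (hparts : ∀ q ∈ partsOf p rows, IsPartition q) (s : ℕ) :
    outsideOf p rows (s + 1) ≤ p s := by
  induction rows generalizing p with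
  | nil => exact (hparts p (self_mem_partsOf p [])).antitone (Nat.le_succ s)
  | cons r rows ih =>
    rw [List.pairwise_cons] at hsorted
    simp only [List.mem_cons, forall_eq_or_imp] at hpos
    rw [outsideOf_cons]
    by_cases hs : (s : ℤ) + 1 = r
    · have hrest : ∀ z ∈ rows, ((s + 1 : ℕ) : ℤ) + 1 ≠ z ∧ ((s + 1 : ℕ) : ℤ) + 1 ≠ -z := by
        intro z hz
        have := hsorted.1 z hz
        have := hpos.2 z hz
        omega
      rw [outsideOf_of_forall_ne hrest, applyStep_of_ne (by omega) (by omega)]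
      exact (hparts p (self_mem_partsOf _ _)).antitone (Nat.le_succ s)
    · calc _ ≤ applyStep p r s := ih hsorted.2 hpos.2 (forall_mem_partsOf_cons hparts)
        _ = p s := applyStep_of_ne hs (by omega)

/-- Rows shrink from top to bottom, so row `s` is final before row `s + 1` starts to shrink. -/
lemma succ_le_outsideOf_of_nonpos {p : ℕ → ℕ} {rows : List ℤ} (hsorted : rows.Pairwise (· ≥ ·))
    (hnonpos : ∀ z ∈ rows, z ≤ 0) (hparts : ∀ q ∈ partsOf p rows, IsPartition q) (s : ℕ) :
    p (s + 1) ≤ outsideOf p rows s := by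
  induction rows generalizing p with
  | nil => exact (hparts p (self_mem_partsOf p [])).antitone (Nat.le_succ s)
  | cons r rows ih =>
    rw [List.pairwise_cons] at hsorted
    simp only [List.mem_cons, forall_eq_or_imp] at hnonpos
    rw [outsideOf_cons]
    by_cases hs : (s : ℤ) + 2 = -r
    · have hrest : ∀ z ∈ rows, (s : ℤ) + 1 ≠ z ∧ (s : ℤ) + 1 ≠ -z := by
        intro z hz
        have := hsorted.1 z hz
        have := hnonpos.2 z hz
        omega
      rw [outsideOf_of_forall_ne hrest, applyStep_of_ne (by omega) (by omega)]
      exact (hparts p (self_mem_partsOf _ _)).antitone (Nat.le_succ s)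
    · calc p (s + 1) = applyStep p r (s + 1) := (applyStep_of_ne (by omega) (by omega)).symm
        _ ≤ _ := ih hsorted.2 hnonpos.2 (forall_mem_partsOf_cons hparts)

lemma exists_eq_pos_append_nonpos {rows : List ℤ} (hsorted : rows.Pairwise (· ≥ ·)) :
    ∃ pos neg, rows = pos ++ neg ∧ (∀ z ∈ pos, 0 < z) ∧ ∀ z ∈ neg, z ≤ 0 := by
  induction rows with
  | nil => exact ⟨[], [], rfl, by simp, by simp⟩
  | cons r rows ih =>
    rw [List.pairwise_cons] at hsorted
    by_cases hr : 0 < r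
    · obtain ⟨pos, neg, rfl, hpos, hneg⟩ := ih hsorted.2
      refine ⟨r :: pos, neg, rfl, ?_, hneg⟩
      simpa only [List.mem_cons, forall_eq_or_imp] using ⟨hr, hpos⟩
    · refine ⟨[], r :: rows, rfl, by simp, ?_⟩
      simp only [List.mem_cons, forall_eq_or_imp]
      exact ⟨by omega, fun z hz => (hsorted.1 z hz).trans (by omega)⟩

lemma starOf_append (p : ℕ → ℕ) {pos neg : List ℤ} (hpos : ∀ z ∈ pos, 0 < z) (hneg : ∀ z ∈ neg, z ≤ 0) :
    starOf p (pos ++ neg) = outsideOf p pos := by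
  rw [starOf, List.filter_append, List.filter_eq_self.mpr (by simpa using hpos),
    List.filter_eq_nil_iff.mpr (by simpa using hneg), List.append_nil, outsideOf]

def IsHorizontalStrip (p q : ℕ → ℕ) : Prop := p ≤ q ∧ ∀ s, q (s + 1) ≤ p s

namespace IsOHS

variable {p : ℕ → ℕ} {rows : List ℤ}

lemma exists_split (h : IsOHS p rows) :
    ∃ pos neg, rows = pos ++ neg ∧ (∀ z ∈ pos, 0 < z) ∧ (∀ z ∈ neg, z ≤ 0) ∧
      pos.Pairwise (· ≥ ·) ∧ neg.Pairwise (· ≥ ·) ∧ (∀ q ∈ partsOf p pos, IsPartition q) ∧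
      (∀ q ∈ partsOf (outsideOf p pos) neg, IsPartition q) := by
  have hsorted : rows.Pairwise (· ≥ ·) := List.isChain_iff_pairwise.mp h.2.1
  obtain ⟨pos, neg, rfl, hpos, hneg⟩ := exists_eq_pos_append_nonpos hsorted
  rw [List.pairwise_append] at hsorted
  exact ⟨pos, neg, rfl, hpos, hneg, hsorted.1, hsorted.2.1,
    fun q hq => h.2.2.1 q (mem_partsOf_append.mpr (.inl hq)),
    fun q hq => h.2.2.1 q (mem_partsOf_append.mpr (.inr hq))⟩

lemma isHorizontalStrip_starOf (h : IsOHS p rows) : IsHorizontalStrip p (starOf p rows) := by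
  obtain ⟨pos, neg, rfl, hpos, hneg, hspos, -, hppos, -⟩ := h.exists_split
  rw [starOf_append p hpos hneg]
  exact ⟨le_of_mem_partsOf_of_nonneg (fun z hz => (hpos z hz).le) (self_mem_partsOf p pos),
    outsideOf_succ_le_of_pos hspos hpos hppos⟩

lemma isHorizontalStrip_outsideOf_starOf (h : IsOHS p rows) :
    IsHorizontalStrip (outsideOf p rows) (starOf p rows) := by
  obtain ⟨pos, neg, rfl, hpos, hneg, -, hsneg, -, hpneg⟩ := h.exists_split
  rw [starOf_append p hpos hneg, outsideOf, List.foldl_append, ← outsideOf, ← outsideOf]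
  exact ⟨le_of_mem_partsOf_of_nonpos hneg (outsideOf_mem_partsOf _ neg),
    succ_le_outsideOf_of_nonpos hsneg hneg hpneg⟩

lemma le_starOf (h : IsOHS p rows) {q : ℕ → ℕ} (hq : q ∈ partsOf p rows) : q ≤ starOf p rows := by
  obtain ⟨pos, neg, rfl, hpos, hneg, -⟩ := h.exists_split
  rw [starOf_append p hpos hneg]
  rcases mem_partsOf_append.mp hq with hq | hq
  · exact le_of_mem_partsOf_of_nonneg (fun z hz => (hpos z hz).le) hq
  · exact le_of_mem_partsOf_of_nonpos hneg hq

lemma isPartition_starOf (h : IsOHS p rows) : IsPartition (starOf p rows) := by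
  obtain ⟨pos, neg, rfl, hpos, hneg, -, -, hppos, -⟩ := h.exists_split
  rw [starOf_append p hpos hneg]
  exact hppos _ (outsideOf_mem_partsOf p pos)

end IsOHS

namespace IsPartition

variable {p : ℕ → ℕ} {j : ℕ}

lemma apply_colLen_lt (hp : IsPartition p) (hj : 1 ≤ j) : p (colLen p j) < j := by
  obtain ⟨N, hN⟩ := hp.2
  exact Nat.sInf_mem (s := {r | p r < j}) ⟨N, show p N < j by omega⟩

lemma lt_colLen_iff (hp : IsPartition p) (hj : 1 ≤ j) {r : ℕ} : r < colLen p j ↔ j ≤ p r := by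
  refine ⟨fun hr => not_lt.mp (Nat.notMem_of_lt_sInf (s := {r | p r < j}) hr), fun hr => ?_⟩
  by_contra! hle
  exact absurd ((hp.antitone hle).trans_lt (hp.apply_colLen_lt hj)) (not_lt.mpr hr)

lemma colLen_eq_card (hp : IsPartition p) (hj : 1 ≤ j) {n : ℕ} (hn : p n < j) :
    colLen p j = #{r ∈ range n | j ≤ p r} := by
  have hle : colLen p j ≤ n := Nat.sInf_le hn
  rw [← card_range (colLen p j)]
  congr 1
  ext r
  simp only [mem_range, mem_filter, ← hp.lt_colLen_iff hj]
  omega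

lemma eq_of_colLen_eq {q : ℕ → ℕ} {g : ℕ} (hp : IsPartition p) (hq : IsPartition q)
    (hp0 : p 0 ≤ g) (hq0 : q 0 ≤ g) (h : ∀ j, 1 ≤ j → j ≤ g → colLen p j = colLen q j) :
    p = q := by
  funext r
  have hpr : p r ≤ g := (hp.antitone (Nat.zero_le r)).trans hp0
  have hqr : q r ≤ g := (hq.antitone (Nat.zero_le r)).trans hq0
  have key : ∀ j, j ≤ p r ↔ j ≤ q r := fun j => by
    by_cases hj : 1 ≤ j ∧ j ≤ g
    · rw [← hp.lt_colLen_iff hj.1, ← hq.lt_colLen_iff hj.1, h j hj.1 hj.2]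
    · omega
  exact le_antisymm ((key _).mp le_rfl) ((key _).mpr le_rfl)

end IsPartition

lemma colLen_zeroP {j : ℕ} (hj : 1 ≤ j) : colLen zeroP j = 0 :=
  Nat.eq_zero_of_le_zero (Nat.sInf_le (show zeroP 0 < j from hj))

lemma colLen_le_colLen {p q : ℕ → ℕ} (hpq : p ≤ q) (hq : IsPartition q) {j : ℕ} (hj : 1 ≤ j) :
    colLen p j ≤ colLen q j :=
  Nat.sInf_le ((hpq _).trans_lt (hq.apply_colLen_lt hj))

lemma IsHorizontalStrip.colLen_le_succ {p q : ℕ → ℕ} (h : IsHorizontalStrip p q)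
    (hp : IsPartition p) {j : ℕ} (hj : 1 ≤ j) : colLen q j ≤ colLen p j + 1 :=
  Nat.sInf_le ((h.2 _).trans_lt (hp.apply_colLen_lt hj))

lemma IsOHS.colLen_outsideOf {p : ℕ → ℕ} {rows : List ℤ} (h : IsOHS p rows) {j : ℕ} (hj : 1 ≤ j) :
    colLen (outsideOf p rows) j
      + (if colLen (starOf p rows) j = colLen p j then 1 else 0)
      + (if colLen (starOf p rows) j = colLen (outsideOf p rows) j + 1 then 1 else 0)
      = colLen p j + 1 := by
  have hin := h.isHorizontalStrip_starOf
  have hout := h.isHorizontalStrip_outsideOf_starOf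
  have h₁ := colLen_le_colLen hin.1 h.isPartition_starOf hj
  have h₂ := hin.colLen_le_succ h.1 hj
  have h₃ := colLen_le_colLen hout.1 h.isPartition_starOf hj
  have h₄ := hout.colLen_le_succ (h.2.2.1 _ (outsideOf_mem_partsOf p rows)) hj
  split_ifs <;> omega

namespace King

variable {m : ℕ} {μ : ℕ → ℕ}

lemma entry_lt_entry (hμ : IsPartition μ) (T : King m μ) {r r' c : ℕ} (hr : r < r')
    (hc : c < μ r') : T.entry r c < T.entry r' c := by
  induction r', hr using Nat.le_induction with
  | base => exact T.colsStrict r c hc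
  | succ n hn ih =>
    exact (ih (hc.trans_le (hμ.antitone (Nat.le_succ n)))).trans (T.colsStrict n c hc)

/-- The length of column `c` of the subtableau `T^{(i)}` of entries `≤ ī`. -/
def truncColLen (T : King m μ) (i c : ℕ) : ℕ :=
  #{r ∈ range m | c < μ r ∧ T.entry r c ≤ 2 * i}

lemma card_filter_entry_eq (hμ : IsPartition μ) (hlen : ∀ i, m ≤ i → μ i = 0) (T : King m μ)
    (c v : ℕ) : #{r ∈ range m | c < μ r ∧ T.entry r c = v} = if hasEntry T c v then 1 else 0 := by
  split_ifs with h
  · obtain ⟨r₀, hr₀, hv⟩ := h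
    rw [card_eq_one]
    refine ⟨r₀, eq_singleton_iff_unique_mem.mpr ⟨?_, fun r hr => ?_⟩⟩
    · have : r₀ < m := by by_contra! h; rw [hlen r₀ h] at hr₀; omega
      simpa using ⟨this, hr₀, hv⟩
    · simp only [mem_filter, mem_range] at hr
      rcases lt_trichotomy r r₀ with hlt | rfl | hlt
      · have := T.entry_lt_entry hμ hlt hr₀; omega
      · rfl
      · have := T.entry_lt_entry hμ hlt hr.2.1; omega
  · exact card_eq_zero.mpr (filter_eq_empty_iff.mpr fun r _ hr => h ⟨r, hr⟩)

lemma truncColLen_zero (T : King m μ) (c : ℕ) : T.truncColLen 0 c = 0 :=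
  card_eq_zero.mpr (filter_eq_empty_iff.mpr fun r _ ⟨hc, hle⟩ => by
    have := T.symplectic r c hc; omega)

lemma truncColLen_succ (hμ : IsPartition μ) (hlen : ∀ i, m ≤ i → μ i = 0) (T : King m μ)
    (i c : ℕ) :
    T.truncColLen (i + 1) c = T.truncColLen i c + (if hasEntry T c (2 * i + 1) then 1 else 0)
      + (if hasEntry T c (2 * i + 2) then 1 else 0) := by
  have hsplit : {r ∈ range m | c < μ r ∧ T.entry r c ≤ 2 * (i + 1)} =
      ({r ∈ range m | c < μ r ∧ T.entry r c ≤ 2 * i} ∪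
        {r ∈ range m | c < μ r ∧ T.entry r c = 2 * i + 1}) ∪
        {r ∈ range m | c < μ r ∧ T.entry r c = 2 * i + 2} := by
    ext r
    simp only [mem_union, mem_filter, mem_range]
    omega
  rw [← card_filter_entry_eq hμ hlen, ← card_filter_entry_eq hμ hlen, truncColLen, truncColLen,
    hsplit, card_union_of_disjoint, card_union_of_disjoint]
  · exact disjoint_filter.mpr fun r _ h₁ h₂ => by omega
  · refine disjoint_left.mpr fun r h₁ h₂ => ?_
    simp only [mem_union, mem_filter] at h₁ h₂
    omega

lemma truncColLen_self (T : King m μ) (c : ℕ) : T.truncColLen m c = #{r ∈ range m | c < μ r} :=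
  congrArg card (filter_congr fun r _ => and_iff_left_of_imp (T.upperBound r c))

end King

section Complement

variable {m g : ℕ} {μ : ℕ → ℕ}

lemma isPartition_hatP (hμ : IsPartition μ) : IsPartition (hatP m g μ) := by
  refine ⟨fun i => ?_, m, by simp [hatP]⟩
  unfold hatP
  split_ifs with h₁ h₂
  · have := hμ.antitone (show m - 1 - (i + 1) ≤ m - 1 - i by omega)
    omega
  all_goals omega

lemma hatP_zero_le : hatP m g μ 0 ≤ g := by
  unfold hatP
  split_ifs <;> omega

lemma colLen_hatP_add (hμ : IsPartition μ) (hcol : ∀ i, μ i ≤ g) {j : ℕ} (hj : 1 ≤ j)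
    (hjg : j ≤ g) : colLen (hatP m g μ) j + #{r ∈ range m | g - j < μ r} = m := by
  rw [(isPartition_hatP hμ).colLen_eq_card hj (n := m) (by simp only [hatP, lt_irrefl, if_false]; omega), card_filter,
    card_filter]
  have hreindex : ∑ k ∈ range m, (if j ≤ hatP m g μ k then 1 else 0)
      = ∑ k ∈ range m, (if μ (m - 1 - k) ≤ g - j then 1 else 0) := by
    refine sum_congr rfl fun k hk => ?_
    have := hcol (m - 1 - k)
    simp only [hatP, if_pos (mem_range.mp hk)]
    congr 1
    exact propext (by omega)
  rw [hreindex, sum_range_reflect (fun r => if μ r ≤ g - j then 1 else 0) m, ← sum_add_distrib]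
  calc _ = ∑ _r ∈ range m, 1 := sum_congr rfl fun r _ => by split_ifs <;> omega
    _ = m := by simp

end Complement

section Psi

variable {m g : ℕ} {μ : ℕ → ℕ} {T : King m μ} {S : SSOT}

lemma colLen_ins_add_truncColLen (hμ : IsPartition μ) (hlen : ∀ i, m ≤ i → μ i = 0)
    (hOHS : ∀ i, IsOHS (S.ins i) (S.rows i))
    (hchain : ∀ i, S.ins (i + 1) = outsideOf (S.ins i) (S.rows i)) (h0 : S.ins 0 = zeroP)
    (hrel : PsiRel m g T S) {i : ℕ} (hi : i ≤ m) {j : ℕ} (hj : 1 ≤ j) (hjg : j ≤ g) :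
    colLen (S.ins i) j + T.truncColLen i (g - j) = i := by
  induction i with
  | zero => rw [h0, colLen_zeroP hj, T.truncColLen_zero]
  | succ i ih =>
    have hstep := (hOHS i).colLen_outsideOf hj
    obtain ⟨hmiss, hmeet⟩ := (hrel i hi).2 j hj hjg
    simp only [hmiss, hmeet] at hstep
    have := ih (by omega)
    rw [hchain, T.truncColLen_succ hμ hlen]
    omega

lemma ins_zero_le (hOHS : ∀ i, IsOHS (S.ins i) (S.rows i))
    (hchain : ∀ i, S.ins (i + 1) = outsideOf (S.ins i) (S.rows i)) (h0 : S.ins 0 = zeroP)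
    (hrel : PsiRel m g T S) {i : ℕ} (hi : i ≤ m) : S.ins i 0 ≤ g := by
  cases i with
  | zero => rw [h0]; exact Nat.zero_le g
  | succ i =>
    rw [hchain]
    exact ((hOHS i).isHorizontalStrip_outsideOf_starOf.1 0).trans (hrel i hi).1

lemma ins_eq_hatP (hμ : IsPartition μ) (hlen : ∀ i, m ≤ i → μ i = 0) (hcol : ∀ i, μ i ≤ g)
    (hOHS : ∀ i, IsOHS (S.ins i) (S.rows i))
    (hchain : ∀ i, S.ins (i + 1) = outsideOf (S.ins i) (S.rows i)) (h0 : S.ins 0 = zeroP)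
    (hrel : PsiRel m g T S) : S.ins m = hatP m g μ := by
  refine (hOHS m).1.eq_of_colLen_eq (isPartition_hatP hμ)
    (ins_zero_le hOHS hchain h0 hrel le_rfl) hatP_zero_le fun j hj hjg => ?_
  have h₁ := colLen_ins_add_truncColLen hμ hlen hOHS hchain h0 hrel le_rfl hj hjg
  have h₂ := colLen_hatP_add (m := m) hμ hcol hj hjg
  rw [T.truncColLen_self] at h₁
  omega

lemma ins_eq_of_le (hchain : ∀ i, S.ins (i + 1) = outsideOf (S.ins i) (S.rows i))
    (hend : ∀ i, m ≤ i → S.rows i = []) {i : ℕ} (hi : m ≤ i) : S.ins i = S.ins m := by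
  induction i, hi using Nat.le_induction with
  | base => rfl
  | succ n hn ih => rw [hchain, hend n hn, ← ih]; rfl

end Psi

theorem psi_lands_in_ssot_general (m g : ℕ) (μ : ℕ → ℕ)
    (hpart : IsPartition μ) (hlen : ∀ i, m ≤ i → μ i = 0) (hcol : ∀ i, μ i ≤ g)
    (T : King m μ) (S : SSOT)
    (hOHS : ∀ i, IsOHS (S.ins i) (S.rows i))
    (hchain : ∀ i, S.ins (i + 1) = outsideOf (S.ins i) (S.rows i))
    (h0 : S.ins 0 = zeroP)
    (hend : ∀ i, m ≤ i → S.rows i = [])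
    (hrel : PsiRel m g T S) :
    (∀ i, 1 ≤ i → i ≤ m → ∀ j, 1 ≤ j → j ≤ g →
      colLen (outsideOf (S.ins (i - 1)) (S.rows (i - 1))) j =
        i - ((Finset.range m).filter
              (fun r => g - j < μ r ∧ T.entry r (g - j) ≤ 2 * i)).card) ∧
    OutsideIs S (hatP m g μ) ∧
    SSOTmem g m zeroP (hatP m g μ) S := by
  have hfinal := ins_eq_hatP hpart hlen hcol hOHS hchain h0 hrel
  have hout : OutsideIs S (hatP m g μ) := ⟨m, fun i hi => (ins_eq_of_le hchain hend hi).trans hfinal⟩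
  refine ⟨fun i hi him j hj hjg => ?_, hout, ⟨hOHS, hchain, m, hend⟩, h0, hout, hend,
    fun i q hq => ?_⟩
  · have := colLen_ins_add_truncColLen hpart hlen hOHS hchain h0 hrel him hj hjg
    rw [← hchain, Nat.sub_add_cancel hi]
    unfold King.truncColLen at this
    omega
  · by_cases hi : i < m
    · exact ((hOHS i).le_starOf hq 0).trans (hrel i hi).1
    · rw [hend i (not_lt.mp hi), partsOf, List.scanl_nil, List.mem_singleton] at hq
      rw [hq, ins_eq_of_le hchain hend (not_lt.mp hi), hfinal]
      exact hatP_zero_le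

/-- for `T ∈ K(μ,m)` and `S = Ψ_{m,g}(T)`, the outside of the `i`-th strip
of `S` is the rotated rectangular complement of the shape of `T^{(i)}` in the `i × g`
rectangle: its `j`-th column has length `i` minus the length of the `(g-j)`-th column of
`T^{(i)}` (the subtableau of entries `≤ ī`).  In particular `outside(S) = μ̂` and
`Ψ_{m,g}(T) ∈ SSOT_g(μ̂,m)`. -/
theorem psi_lands_in_ssot (m g : ℕ) (hm : 1 ≤ m) (hg : 1 ≤ g) (μ : ℕ → ℕ)
    (hpart : IsPartition μ) (hlen : ∀ i, m ≤ i → μ i = 0) (hcol : ∀ i, μ i ≤ g)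
    (T : King m μ) (S : SSOT)
    (hOHS : ∀ i, IsOHS (S.ins i) (S.rows i))
    (hchain : ∀ i, S.ins (i + 1) = outsideOf (S.ins i) (S.rows i))
    (h0 : S.ins 0 = zeroP)
    (hend : ∀ i, m ≤ i → S.rows i = [])
    (hrel : PsiRel m g T S) :
    (∀ i, 1 ≤ i → i ≤ m → ∀ j, 1 ≤ j → j ≤ g →
      colLen (outsideOf (S.ins (i - 1)) (S.rows (i - 1))) j =
        i - ((Finset.range m).filter
              (fun r => g - j < μ r ∧ T.entry r (g - j) ≤ 2 * i)).card) ∧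
    OutsideIs S (hatP m g μ) ∧
    SSOTmem g m zeroP (hatP m g μ) S :=
  psi_lands_in_ssot_general m g μ hpart hlen hcol T S hOHS hchain h0 hend hrel

end KingSSOT
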